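/- arXiv:1601.02212 — 2 statements merged into one kernel-verified Lean document; each statement's English description precedes it below -/
import Mathlib

section
/- The poset of all Dyck paths (of all lengths) ordered by componentwise comparison of their infinite binary words (with infinitely many appended 0's) is a lattice: the componentwise maximum of two Dyck words is a Dyck word giving the join, and a meet also exists (given by truncating the componentwise minimum at the first point where 0's outnumber 1's). -/
/-!
The componentwise maximum of two Dyck words has on every prefix at least as many 1's as either of
them, so it satisfies the prefix condition up to the larger of the two lengths, after which it has
no more 1's; cut at twice its number of 1's it is again a Dyck word.

The componentwise minimum `h` may violate the prefix condition. Let `p₀` be the first prefix length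
at which `h` has more 0's than 1's, and keep only the first `p₀ - 1` letters of `h`. A Dyck word
below `h` has on the prefix of length `p₀` at most as many 1's as `h`, so it must have ended before
`p₀`; hence it lies below the truncation, which is therefore the meet.
-/

/-- A Dyck word: every prefix has at least as many up steps (`true`) as down
steps (`false`), and the total numbers of up and down steps are equal. -/
def IsDyck (w : List Bool) : Prop :=
  (∀ p : ℕ, (w.take p).count false ≤ (w.take p).count true) ∧
    w.count false = w.count true

/-- The infinite binary word of a Dyck path: its steps (`true` = 1 = up,
`false` = 0 = down) followed by infinitely many 0's. -/
def wordOf (w : List Bool) : ℕ → Bool := fun i => w.getD i false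

def countOnes (f : ℕ → Bool) (p : ℕ) : ℕ := Nat.count (fun i => f i) p

section countOnes

variable {f g : ℕ → Bool} {n p : ℕ}

lemma countOnes_succ (f : ℕ → Bool) (p : ℕ) :
    countOnes f (p + 1) = countOnes f p + if f p then 1 else 0 :=
  Nat.count_succ _ p

lemma countOnes_mono (f : ℕ → Bool) : Monotone (countOnes f) :=
  Nat.count_monotone _

lemma countOnes_mono_left (h : f ≤ g) (p : ℕ) : countOnes f p ≤ countOnes g p :=
  Nat.count_mono_left fun i _ => Bool.le_iff_imp.1 (h i)

lemma countOnes_congr (h : ∀ i < p, f i = g i) : countOnes f p = countOnes g p :=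
  le_antisymm (Nat.count_mono_left fun i hi hfi => h i hi ▸ hfi)
    (Nat.count_mono_left fun i hi hgi => (h i hi).symm ▸ hgi)

lemma countOnes_eq_of_le (hf : ∀ i, n ≤ i → f i = false) (h : n ≤ p) :
    countOnes f p = countOnes f n := by
  induction p, h using Nat.le_induction with
  | base => rfl
  | succ p hp ih => simp [countOnes_succ, hf p hp, ih]

lemma count_true_take (w : List Bool) (p : ℕ) :
    (w.take p).count true = countOnes (wordOf w) p := by
  induction p with
  | zero => simp [countOnes]
  | succ p ih =>
    rw [List.take_add_one, List.count_append, ih, countOnes_succ]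
    cases h : w[p]? with
    | none => simp [wordOf, List.getD_eq_getElem?_getD, h]
    | some b => cases b <;> simp [wordOf, List.getD_eq_getElem?_getD, h]

end countOnes

structure IsDyckWord (f : ℕ → Bool) (n : ℕ) : Prop where
  eq_false_of_le : ∀ i, n ≤ i → f i = false
  le_two_mul_countOnes : ∀ p ≤ n, p ≤ 2 * countOnes f p
  two_mul_countOnes_eq : 2 * countOnes f n = n

lemma wordOf_eq_false {w : List Bool} {i : ℕ} (h : w.length ≤ i) : wordOf w i = false :=
  List.getD_eq_default _ _ h

lemma isDyck_iff_isDyckWord (w : List Bool) : IsDyck w ↔ IsDyckWord (wordOf w) w.length := by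
  have hsplit (p : ℕ) := List.count_false_add_count_true (w.take p)
  simp only [List.length_take, count_true_take] at hsplit
  have hstable (p : ℕ) (hp : w.length ≤ p) :=
    countOnes_eq_of_le (fun _ => wordOf_eq_false) hp
  have hbalanced := count_true_take w w.length
  rw [List.take_length] at hbalanced
  have hwhole := hsplit w.length
  rw [List.take_length, min_self] at hwhole
  constructor
  · rintro ⟨hprefix, hcount⟩
    refine ⟨fun _ => wordOf_eq_false, fun p hp => ?_, by omega⟩
    have := hsplit p
    have := hprefix p
    rw [count_true_take] at this
    omega
  · intro hw
    refine ⟨fun p => ?_, by have := hw.two_mul_countOnes_eq; omega⟩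
    rw [count_true_take]
    have := hsplit p
    rcases le_total p w.length with hp | hp
    · have := hw.le_two_mul_countOnes p hp
      omega
    · have := hstable p hp
      have := hw.two_mul_countOnes_eq
      omega

lemma wordOf_map_range {f : ℕ → Bool} {n : ℕ} (hf : ∀ i, n ≤ i → f i = false) :
    wordOf ((List.range n).map f) = f := by
  funext i
  by_cases hi : i < n
  · simp [wordOf, List.getD_eq_getElem?_getD, hi]
  · simp [wordOf, List.getD_eq_getElem?_getD, hi, hf i (not_lt.1 hi)]

namespace IsDyckWord

variable {f g h : ℕ → Bool} {n m : ℕ}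

lemma exists_isDyck (hf : IsDyckWord f n) : ∃ w, IsDyck w ∧ wordOf w = f := by
  have hw := wordOf_map_range hf.eq_false_of_le
  refine ⟨(List.range n).map f, ?_, hw⟩
  rw [isDyck_iff_isDyckWord, hw, List.length_map, List.length_range]
  exact hf

lemma two_mul_countOnes_of_le (hf : IsDyckWord f n) {p : ℕ} (hp : n ≤ p) :
    2 * countOnes f p = n := by
  rw [countOnes_eq_of_le hf.eq_false_of_le hp, hf.two_mul_countOnes_eq]

lemma min_le_two_mul_countOnes (hf : IsDyckWord f n) (hfg : f ≤ g) (p : ℕ) :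
    min p n ≤ 2 * countOnes g p := by
  refine le_trans ?_ (Nat.mul_le_mul_left 2 (countOnes_mono_left hfg p))
  rcases le_total p n with hpn | hnp
  · exact (min_eq_left hpn).trans_le (hf.le_two_mul_countOnes p hpn)
  · exact (min_eq_right hnp).trans_le (hf.two_mul_countOnes_of_le hnp).ge

lemma sup (hf : IsDyckWord f n) (hg : IsDyckWord g m) :
    IsDyckWord (f ⊔ g) (2 * countOnes (f ⊔ g) (max n m)) := by
  have hf' : f ≤ f ⊔ g := le_sup_left
  have hg' : g ≤ f ⊔ g := le_sup_right
  have hvanish : ∀ i, max n m ≤ i → (f ⊔ g) i = false := fun i hi => by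
    simp [hf.eq_false_of_le i (le_of_max_le_left hi), hg.eq_false_of_le i (le_of_max_le_right hi)]
  have hlength : max n m ≤ 2 * countOnes (f ⊔ g) (max n m) := by
    have := hf.min_le_two_mul_countOnes hf' (max n m)
    have := hg.min_le_two_mul_countOnes hg' (max n m)
    omega
  refine ⟨fun i hi => hvanish i (hlength.trans hi), fun p hp => ?_, ?_⟩
  · rcases le_total p (max n m) with hpnm | hpnm
    · have := hf.min_le_two_mul_countOnes hf' p
      have := hg.min_le_two_mul_countOnes hg' p
      omega
    · rwa [countOnes_eq_of_le hvanish hpnm]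
  · rw [countOnes_eq_of_le hvanish hlength]

lemma lt_of_le_of_two_mul_countOnes_lt (hf : IsDyckWord f n) (hfh : f ≤ h)
    {p : ℕ} (hp : 2 * countOnes h p < p) : n < p := by
  have := hf.min_le_two_mul_countOnes hfh p
  omega

lemma exists_isGreatest_of_le (hf : IsDyckWord f n) (hhf : h ≤ f) :
    ∃ M, IsGreatest {F | (∃ m, IsDyckWord F m) ∧ F ≤ h} M := by
  have hex : ∃ p, 2 * countOnes h p < p := ⟨n + 1, by
    have := countOnes_mono_left hhf (n + 1)
    have := hf.two_mul_countOnes_of_le (Nat.le_add_right n 1)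
    omega⟩
  have hp₀ : 2 * countOnes h (Nat.find hex) < Nat.find hex := Nat.find_spec hex
  have hbelow : ∀ p < Nat.find hex, p ≤ 2 * countOnes h p :=
    fun p hp => not_lt.1 (Nat.find_min hex hp)
  obtain ⟨k, hk⟩ : ∃ k, Nat.find hex = k + 1 := Nat.exists_eq_succ_of_ne_zero (by omega)
  rw [hk] at hp₀ hbelow
  have hbalanced : 2 * countOnes h k = k := by
    have := hbelow k (Nat.lt_add_one k)
    have := countOnes_mono h (Nat.le_add_right k 1)
    omega
  let M : ℕ → Bool := fun i => decide (i < k) && h i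
  have hcount : ∀ p ≤ k, countOnes M p = countOnes h p := fun p hp =>
    countOnes_congr fun i hi => by simp [M, show i < k by omega]
  refine ⟨M, ⟨⟨k, fun i hi => by simp [M, not_lt.2 hi], fun p hp => ?_, ?_⟩,
    fun i => Bool.and_le_right _ _⟩, ?_⟩
  · rw [hcount p hp]
    exact hbelow p (by omega)
  · rw [hcount k le_rfl, hbalanced]
  · rintro F ⟨⟨m, hF⟩, hFh⟩ i
    rw [Bool.le_iff_imp]
    intro hFi
    have hmk := hF.lt_of_le_of_two_mul_countOnes_lt hFh hp₀
    have him : i < m := by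
      by_contra! hmi
      simp [hF.eq_false_of_le i hmi] at hFi
    simp [M, Bool.le_iff_imp.1 (hFh i) hFi, show i < k by omega]

end IsDyckWord

/-- The poset of all Dyck paths, ordered by componentwise comparison of their
infinite binary words, is a lattice: the componentwise maximum of two Dyck
words is a Dyck word and gives the join, and a meet also exists. -/
theorem dyck_poset_is_lattice (D E : List Bool) (hD : IsDyck D) (hE : IsDyck E) :
    (∃ J : List Bool, IsDyck J ∧
      (∀ i : ℕ, wordOf J i = wordOf D i ⊔ wordOf E i)) ∧
    (∃ M : List Bool, IsDyck M ∧
      (∀ i : ℕ, wordOf M i ≤ wordOf D i ∧ wordOf M i ≤ wordOf E i) ∧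
      ∀ F : List Bool, IsDyck F → (∀ i : ℕ, wordOf F i ≤ wordOf D i) →
        (∀ i : ℕ, wordOf F i ≤ wordOf E i) →
        ∀ i : ℕ, wordOf F i ≤ wordOf M i) := by
  rw [isDyck_iff_isDyckWord] at hD hE
  constructor
  · obtain ⟨J, hJ, hJword⟩ := (hD.sup hE).exists_isDyck
    exact ⟨J, hJ, fun i => by rw [hJword]; rfl⟩
  · obtain ⟨_, ⟨⟨_, hM⟩, hMle⟩, hMgreatest⟩ :=
      hD.exists_isGreatest_of_le (inf_le_left : wordOf D ⊓ wordOf E ≤ wordOf D)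
    obtain ⟨M, hMdyck, rfl⟩ := hM.exists_isDyck
    refine ⟨M, hMdyck, fun i => ⟨(hMle i).trans inf_le_left, (hMle i).trans inf_le_right⟩,
      fun F hF hFD hFE => hMgreatest ⟨⟨_, (isDyck_iff_isDyckWord F).1 hF⟩, le_inf hFD hFE⟩⟩
end

section
/- The map sending σ ∈ S_n to the sequence (Δ(σ^{(n-1)}), ..., Δ(σ'), Δ(σ)), where σ^{(i)} denotes σ with its i largest values deleted, is a bijection from S_n to the set of n-chains of Dyck shapes D_1 ⊏ ... ⊏ D_n. -/
/-- Ribbon addition: `E` is obtained from `D ++ [false, false]` by changing a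
single down step, other than the last one, into an up step (this includes the
case `E = D ++ [true, false]`). -/
def Ribbon (D E : List Bool) : Prop :=
  ∃ k, k < D.length + 1 ∧ (D ++ [false, false])[k]? = some false ∧
    E = (D ++ [false, false]).set k true

/-- The one-line word of `σ ∈ S_n` on values `1, …, n`, extended by the
conventions `σ₀ = 0` and `σ_{n+1} = n+1`. -/
def extPerm {n : ℕ} (σ : Equiv.Perm (Fin n)) : ℕ → ℕ := fun i =>
  if h : 1 ≤ i ∧ i ≤ n then ((σ ⟨i - 1, by omega⟩ : Fin n) : ℕ) + 1
  else if i = 0 then 0 else n + 1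

/-- The position (between `1` and `n`) of the value `v` in the one-line word
of `σ`. -/
def posOf {n : ℕ} (σ : Equiv.Perm (Fin n)) (v : ℕ) : ℕ :=
  if h : v - 1 < n then ((σ.symm ⟨v - 1, h⟩ : Fin n) : ℕ) + 1 else 0

/-- The profile `Δ(σ)` of a permutation: the factor `w_{2i-1} w_{2i}` is `UU`
if the value `i` is a valley, `DD` if it is a peak, `UD` if it is a double
ascent and `DU` if it is a double descent. -/
def profile {n : ℕ} (σ : Equiv.Perm (Fin n)) : List Bool :=
  (List.range (2 * n)).map fun j =>
    let p := posOf σ (j / 2 + 1)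
    if j % 2 = 0 then decide (extPerm σ p < extPerm σ (p + 1))
    else decide (extPerm σ p < extPerm σ (p - 1))

/-- The permutation `σ'` obtained from `σ ∈ S_{n+1}` by deleting the largest
value from its one-line word. -/
noncomputable def delTop {n : ℕ} (σ : Equiv.Perm (Fin (n + 1))) : Equiv.Perm (Fin n) :=
  Equiv.ofBijective
    (fun j => (σ ((σ.symm (Fin.last n)).succAbove j)).castPred
      (fun h => Fin.succAbove_ne (σ.symm (Fin.last n)) j
        (by simpa using congrArg σ.symm h)))
    (Finite.injective_iff_bijective.mp (fun j₁ j₂ h => by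
      have h2 := congrArg Fin.castSucc h
      rw [Fin.castSucc_castPred, Fin.castSucc_castPred] at h2
      exact Fin.succAbove_right_injective (σ.injective h2)))

/-- Delete the largest value from a permutation (identity in size `0`). -/
noncomputable def delTop' : {m : ℕ} → Equiv.Perm (Fin m) → Equiv.Perm (Fin (m - 1))
  | 0, σ => σ
  | _ + 1, σ => delTop σ

/-- `dels σ m` is `σ^{(m)}`: the permutation obtained from `σ` by deleting its
`m` largest values. -/
noncomputable def dels {n : ℕ} (σ : Equiv.Perm (Fin n)) : (m : ℕ) → Equiv.Perm (Fin (n - m))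
  | 0 => σ
  | m + 1 => delTop' (dels σ m)

/-!
Write `σ'` for `σ ∈ S_{n+1}` with `n + 1` deleted. Then `Δ(σ)` arises from `Δ(σ') DD` by turning
exactly one `D` into `U`: the first step of `n + 1` if `n + 1` stands last, and otherwise the step
of the larger neighbour of `n + 1` (in the extended word, with sentinels `0` and `n + 2`) on the
side facing `n + 1`, which in `σ'` faced the smaller neighbour. So `Δ(σ)` is a ribbon addition to
`Δ(σ')`. Conversely `σ'` and the flipped step determine the position of `n + 1`, and every down
step of `Δ(σ') DD` but the last is flipped by inserting `n + 1` just before the value of an odd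
step, just after the value of an even step, or at the end. Induction on `n` gives the bijection.
-/

section Dyck

lemma IsDyck.count_false_take_append_le {D : List Bool} (hD : IsDyck D) (p : ℕ) :
    ((D ++ [false, false]).take p).count false
      ≤ ((D ++ [false, false]).take p).count true + 2 := by
  have := hD.1 p
  have : (([false, false] : List Bool).take (p - D.length)).count false ≤ 2 :=
    List.count_le_length.trans (by simp)
  simp only [List.take_append, List.count_append]
  omega

lemma List.count_set_true {L : List Bool} {k : ℕ} (hk : k < L.length) (h : L[k] = false) :
    (L.set k true).count true = L.count true + 1 ∧
      (L.set k true).count false = L.count false - 1 := by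
  simp [List.count_set hk, h]

/-- Past the flipped step, a prefix of `E` has two more up steps than down steps compared with
the same prefix of `D ++ [false, false]`, which has at most two more down steps than up steps. -/
theorem IsDyck.ribbon {D E : List Bool} (hD : IsDyck D) (hR : Ribbon D E) : IsDyck E := by
  obtain ⟨k, hk, hfalse, rfl⟩ := hR
  have hlen : (D ++ [false, false]).length = D.length + 2 := by simp
  have hkL : k < (D ++ [false, false]).length := by omega
  have hLk : (D ++ [false, false])[k] = false := by
    simpa [List.getElem?_eq_getElem hkL] using hfalse
  refine ⟨fun p => ?_, ?_⟩
  · rw [List.take_set]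
    by_cases hp : k < p
    · have hkp : k < ((D ++ [false, false]).take p).length := by
        rw [List.length_take]
        omega
      have := List.count_set_true hkp (by rwa [List.getElem_take])
      have := hD.count_false_take_append_le p
      omega
    · rw [List.set_eq_of_length_le (by rw [List.length_take]; omega),
        List.take_append_of_le_length (by omega)]
      exact hD.1 p
  · have := List.count_set_true hkL hLk
    have : (D ++ [false, false]).count false = D.count false + 2 := by simp
    have : (D ++ [false, false]).count true = D.count true := by simp
    have := hD.2
    omega

lemma IsDyck.eq_of_length_eq_two {D : List Bool} (hD : IsDyck D) (h : D.length = 2) :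
    D = [true, false] := by
  match D, h with
  | [x, y], _ =>
    have h₁ := hD.1 1
    have h₂ := hD.2
    cases x <;> cases y <;> simp_all

end Dyck

open Equiv

namespace ProfileChain

variable {n : ℕ}

section ExtendedWord

lemma extPerm_zero (σ : Perm (Fin n)) : extPerm σ 0 = 0 := by
  simp [extPerm]

lemma extPerm_of_lt (σ : Perm (Fin n)) {i : ℕ} (h : n < i) : extPerm σ i = n + 1 := by
  simp only [extPerm, dif_neg (show ¬(1 ≤ i ∧ i ≤ n) by omega), if_neg (show i ≠ 0 by omega)]

lemma extPerm_mem_Icc (σ : Perm (Fin n)) {i : ℕ} (h1 : 1 ≤ i) (h2 : i ≤ n) :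
    1 ≤ extPerm σ i ∧ extPerm σ i ≤ n := by
  simp only [extPerm, dif_pos (⟨h1, h2⟩ : 1 ≤ i ∧ i ≤ n)]
  have := (σ ⟨i - 1, by omega⟩).isLt
  omega

lemma extPerm_le (σ : Perm (Fin n)) {i : ℕ} (h : i ≤ n) : extPerm σ i ≤ n := by
  rcases Nat.eq_zero_or_pos i with rfl | hi
  · simp [extPerm_zero]
  · exact (extPerm_mem_Icc σ hi h).2

lemma posOf_mem_Icc (σ : Perm (Fin n)) {v : ℕ} (h1 : 1 ≤ v) (h2 : v ≤ n) :
    1 ≤ posOf σ v ∧ posOf σ v ≤ n := by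
  simp only [posOf, dif_pos (show v - 1 < n by omega)]
  have := (σ.symm ⟨v - 1, by omega⟩).isLt
  omega

lemma posOf_extPerm (σ : Perm (Fin n)) {i : ℕ} (h1 : 1 ≤ i) (h2 : i ≤ n) :
    posOf σ (extPerm σ i) = i := by
  simp only [extPerm, dif_pos (⟨h1, h2⟩ : 1 ≤ i ∧ i ≤ n), posOf, Nat.add_sub_cancel,
    dif_pos (σ _).isLt, Fin.eta, symm_apply_apply]
  omega

lemma extPerm_posOf (σ : Perm (Fin n)) {v : ℕ} (h1 : 1 ≤ v) (h2 : v ≤ n) :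
    extPerm σ (posOf σ v) = v := by
  have hp := posOf_mem_Icc σ h1 h2
  simp only [posOf, dif_pos (show v - 1 < n by omega)] at hp ⊢
  simp only [extPerm, dif_pos hp, Nat.add_sub_cancel, Fin.eta, apply_symm_apply]
  omega

lemma extPerm_injOn (σ : Perm (Fin n)) {i j : ℕ} (hi : i ≤ n + 1) (hj : j ≤ n + 1)
    (h : extPerm σ i = extPerm σ j) : i = j := by
  have sentinel : ∀ {k}, k ≤ n + 1 → ¬(1 ≤ k ∧ k ≤ n) → extPerm σ k = k := fun {k} _ _ => by
    obtain rfl | rfl : k = 0 ∨ k = n + 1 := by omega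
    exacts [extPerm_zero σ, extPerm_of_lt σ (lt_add_one n)]
  by_cases hi' : 1 ≤ i ∧ i ≤ n <;> by_cases hj' : 1 ≤ j ∧ j ≤ n
  · rw [← posOf_extPerm σ hi'.1 hi'.2, h, posOf_extPerm σ hj'.1 hj'.2]
  · have := extPerm_mem_Icc σ hi'.1 hi'.2
    rw [sentinel hj hj'] at h
    omega
  · have := extPerm_mem_Icc σ hj'.1 hj'.2
    rw [sentinel hi hi'] at h
    omega
  · rwa [sentinel hi hi', sentinel hj hj'] at h

end ExtendedWord

section DeleteMax

variable (σ : Perm (Fin (n + 1)))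

def maxPos : ℕ := (σ.symm (Fin.last n) : ℕ) + 1

lemma maxPos_le : maxPos σ ≤ n + 1 := by
  have := (σ.symm (Fin.last n)).isLt
  unfold maxPos
  omega

lemma one_le_maxPos : 1 ≤ maxPos σ := Nat.le_add_left 1 _

lemma posOf_last : posOf σ (n + 1) = maxPos σ := by
  simp only [posOf, dif_pos (show n + 1 - 1 < n + 1 by omega), maxPos]
  rfl

lemma extPerm_maxPos : extPerm σ (maxPos σ) = n + 1 := by
  rw [← posOf_last]
  exact extPerm_posOf σ (by omega) le_rfl

lemma extPerm_le_of_ne_maxPos {i : ℕ} (hi : i ≤ n + 1) (h : i ≠ maxPos σ) :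
    extPerm σ i ≤ n := by
  have := extPerm_le σ hi
  have := extPerm_maxPos σ
  have := mt (extPerm_injOn σ (by omega) (by have := maxPos_le σ; omega)) h
  omega

lemma posOf_ne_maxPos {v : ℕ} (h1 : 1 ≤ v) (h2 : v ≤ n) : posOf σ v ≠ maxPos σ := by
  intro h
  have := extPerm_posOf σ h1 (by omega : v ≤ n + 1)
  rw [h, extPerm_maxPos] at this
  omega

lemma extPerm_delTop_of_lt {i : ℕ} (h : i < maxPos σ) :
    extPerm (delTop σ) i = extPerm σ i := by
  rcases Nat.eq_zero_or_pos i with rfl | hi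
  · rw [extPerm_zero, extPerm_zero]
  have hi' : i ≤ n := by have := maxPos_le σ; omega
  have hsucc : (σ.symm (Fin.last n)).succAbove ⟨i - 1, by omega⟩ = ⟨i - 1, by omega⟩ := by
    rw [Fin.succAbove_of_castSucc_lt _ _
      (by simp only [Fin.lt_def, Fin.val_castSucc, maxPos] at h ⊢; omega)]
    rfl
  simp only [extPerm, dif_pos (⟨hi, hi'⟩ : 1 ≤ i ∧ i ≤ n),
    dif_pos (⟨hi, by omega⟩ : 1 ≤ i ∧ i ≤ n + 1)]
  change ((σ ((σ.symm (Fin.last n)).succAbove _) : Fin (n + 1)) : ℕ) + 1 = _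
  rw [hsucc]

lemma extPerm_delTop_of_le {i : ℕ} (h : maxPos σ ≤ i) (hi : i ≤ n) :
    extPerm (delTop σ) i = extPerm σ (i + 1) := by
  have h1 := one_le_maxPos σ
  have hsucc : (σ.symm (Fin.last n)).succAbove ⟨i - 1, by omega⟩ = ⟨i + 1 - 1, by omega⟩ := by
    rw [Fin.succAbove_of_le_castSucc _ _
      (by simp only [Fin.le_def, Fin.val_castSucc, maxPos] at h ⊢; omega)]
    exact Fin.ext (by simp only [Fin.succ_mk]; omega)
  simp only [extPerm, dif_pos (⟨by omega, hi⟩ : 1 ≤ i ∧ i ≤ n),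
    dif_pos (⟨by omega, by omega⟩ : 1 ≤ i + 1 ∧ i + 1 ≤ n + 1)]
  change ((σ ((σ.symm (Fin.last n)).succAbove _) : Fin (n + 1)) : ℕ) + 1 = _
  rw [hsucc]

lemma posOf_delTop_of_lt {v : ℕ} (h1 : 1 ≤ v) (h2 : v ≤ n) (h : posOf σ v < maxPos σ) :
    posOf (delTop σ) v = posOf σ v := by
  have hq := posOf_mem_Icc σ h1 (by omega : v ≤ n + 1)
  have := maxPos_le σ
  conv_lhs => rw [← extPerm_posOf σ h1 (by omega), ← extPerm_delTop_of_lt σ h]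
  exact posOf_extPerm _ hq.1 (by omega)

lemma posOf_delTop_of_gt {v : ℕ} (h1 : 1 ≤ v) (h2 : v ≤ n) (h : maxPos σ < posOf σ v) :
    posOf (delTop σ) v = posOf σ v - 1 := by
  have hq := posOf_mem_Icc σ h1 (by omega : v ≤ n + 1)
  have hshift := extPerm_delTop_of_le σ (i := posOf σ v - 1) (by omega) (by omega)
  rw [Nat.sub_add_cancel (by omega), extPerm_posOf σ h1 (by omega)] at hshift
  conv_lhs => rw [← hshift]
  exact posOf_extPerm _ (by have := one_le_maxPos σ; omega) (by omega)

end DeleteMax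

section Letters

def largerAfter (σ : Perm (Fin n)) (v : ℕ) : Bool := decide (v < extPerm σ (posOf σ v + 1))

def largerBefore (σ : Perm (Fin n)) (v : ℕ) : Bool := decide (v < extPerm σ (posOf σ v - 1))

def profileStep (σ : Perm (Fin n)) (j : ℕ) : Bool :=
  if j % 2 = 0 then largerAfter σ (j / 2 + 1) else largerBefore σ (j / 2 + 1)

lemma profile_eq_map (σ : Perm (Fin n)) :
    profile σ = (List.range (2 * n)).map (profileStep σ) := by
  refine List.map_congr_left fun j hj => ?_
  rw [List.mem_range] at hj
  simp only [profileStep, largerAfter, largerBefore, extPerm_posOf σ (by omega : 1 ≤ j / 2 + 1)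
    (by omega : j / 2 + 1 ≤ n)]

lemma length_profile (σ : Perm (Fin n)) : (profile σ).length = 2 * n := by
  simp [profile_eq_map]

lemma getElem_profile (σ : Perm (Fin n)) {j : ℕ} (h : j < (profile σ).length) :
    (profile σ)[j] = profileStep σ j := by
  simp [profile_eq_map]

lemma profileStep_even {σ : Perm (Fin n)} {j : ℕ} (h : j % 2 = 0) :
    profileStep σ j = largerAfter σ (j / 2 + 1) := if_pos h

lemma profileStep_odd {σ : Perm (Fin n)} {j : ℕ} (h : j % 2 = 1) :
    profileStep σ j = largerBefore σ (j / 2 + 1) := if_neg (by omega)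

end Letters

section StepsUnderDeletion

variable (σ : Perm (Fin (n + 1)))

/-- Equals `0` when the maximum comes first. -/
def predMax : ℕ := extPerm σ (maxPos σ - 1)

/-- Equals `n + 2` when the maximum comes last. -/
def succMax : ℕ := extPerm σ (maxPos σ + 1)

/-- Deleting `n + 1` from the extended word of `σ` gives that of `delTop σ`, up to the right
sentinel, which is larger than every letter in both words. -/
lemma lt_extPerm_delTop_iff {v i : ℕ} (hv : v ≤ n) (hi : i ≤ n + 1) :
    v < extPerm (delTop σ) i ↔ v < extPerm σ (if i < maxPos σ then i else i + 1) := by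
  split_ifs with h
  · rw [extPerm_delTop_of_lt σ h]
  · rcases (show i ≤ n ∨ i = n + 1 by omega) with hi' | rfl
    · rw [extPerm_delTop_of_le σ (by omega) hi']
    · rw [extPerm_of_lt _ (lt_add_one n), extPerm_of_lt σ (lt_add_one (n + 1))]
      omega

lemma largerAfter_last : largerAfter σ (n + 1) = decide (maxPos σ = n + 1) := by
  rw [largerAfter, posOf_last, decide_eq_decide]
  by_cases h : maxPos σ = n + 1
  · rw [h, extPerm_of_lt σ (lt_add_one (n + 1))]
    simp
  · have := extPerm_le_of_ne_maxPos σ (i := maxPos σ + 1) (by have := maxPos_le σ; omega)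
      (by omega)
    omega

lemma largerBefore_last : largerBefore σ (n + 1) = false := by
  have := extPerm_le_of_ne_maxPos σ (i := maxPos σ - 1) (by have := maxPos_le σ; omega)
    (by have := one_le_maxPos σ; omega)
  rw [largerBefore, posOf_last, decide_eq_false_iff_not]
  omega

variable {σ} {v : ℕ}

lemma largerAfter_of_succ_eq (hv : v ≤ n) (hq : posOf σ v + 1 = maxPos σ) :
    largerAfter σ v = true := by
  rw [largerAfter, hq, extPerm_maxPos, decide_eq_true_eq]
  omega

lemma largerBefore_of_eq_succ (hv : v ≤ n) (hq : posOf σ v = maxPos σ + 1) :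
    largerBefore σ v = true := by
  rw [largerBefore, hq, Nat.add_sub_cancel, extPerm_maxPos, decide_eq_true_eq]
  omega

lemma largerAfter_delTop (hv₁ : 1 ≤ v) (hv₂ : v ≤ n) (hq : posOf σ v + 1 ≠ maxPos σ) :
    largerAfter (delTop σ) v = largerAfter σ v := by
  have hq' := posOf_mem_Icc σ hv₁ (by omega : v ≤ n + 1)
  have := maxPos_le σ
  simp only [largerAfter, decide_eq_decide]
  rcases lt_or_gt_of_ne (posOf_ne_maxPos σ hv₁ hv₂) with hlt | hgt
  · rw [posOf_delTop_of_lt σ hv₁ hv₂ hlt, lt_extPerm_delTop_iff σ hv₂ (by omega),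
      if_pos (by omega)]
  · rw [posOf_delTop_of_gt σ hv₁ hv₂ hgt, lt_extPerm_delTop_iff σ hv₂ (by omega),
      if_neg (by omega), Nat.sub_add_cancel (by omega)]

lemma largerAfter_delTop_of_succ_eq (hv₁ : 1 ≤ v) (hv₂ : v ≤ n) (hq : posOf σ v + 1 = maxPos σ) :
    largerAfter (delTop σ) v = decide (v < succMax σ) := by
  have := maxPos_le σ
  simp only [largerAfter, decide_eq_decide]
  rw [posOf_delTop_of_lt σ hv₁ hv₂ (by omega), lt_extPerm_delTop_iff σ hv₂ (by omega),
    if_neg (by omega), hq, succMax]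

lemma largerBefore_delTop (hv₁ : 1 ≤ v) (hv₂ : v ≤ n) (hq : posOf σ v ≠ maxPos σ + 1) :
    largerBefore (delTop σ) v = largerBefore σ v := by
  have hq' := posOf_mem_Icc σ hv₁ (by omega : v ≤ n + 1)
  simp only [largerBefore, decide_eq_decide]
  rcases lt_or_gt_of_ne (posOf_ne_maxPos σ hv₁ hv₂) with hlt | hgt
  · rw [posOf_delTop_of_lt σ hv₁ hv₂ hlt, lt_extPerm_delTop_iff σ hv₂ (by omega),
      if_pos (by omega)]
  · rw [posOf_delTop_of_gt σ hv₁ hv₂ hgt,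
      lt_extPerm_delTop_iff σ hv₂ (i := posOf σ v - 1 - 1) (by omega), if_neg (by omega),
      show posOf σ v - 1 - 1 + 1 = posOf σ v - 1 by omega]

lemma largerBefore_delTop_of_eq_succ (hv₁ : 1 ≤ v) (hv₂ : v ≤ n) (hq : posOf σ v = maxPos σ + 1) :
    largerBefore (delTop σ) v = decide (v < predMax σ) := by
  have := one_le_maxPos σ
  have := maxPos_le σ
  simp only [largerBefore, decide_eq_decide]
  rw [posOf_delTop_of_gt σ hv₁ hv₂ (by omega),
    lt_extPerm_delTop_iff σ hv₂ (i := posOf σ v - 1 - 1) (by omega),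
    if_pos (by omega), hq, Nat.add_sub_cancel, predMax]

end StepsUnderDeletion

section FlipIndex

variable (σ : Perm (Fin (n + 1)))

lemma predMax_le : predMax σ ≤ n :=
  extPerm_le_of_ne_maxPos σ (by have := maxPos_le σ; omega)
    (by have := one_le_maxPos σ; omega)

variable {σ}

lemma succMax_mem_Icc (h : maxPos σ ≠ n + 1) : 1 ≤ succMax σ ∧ succMax σ ≤ n := by
  have := maxPos_le σ
  exact ⟨(extPerm_mem_Icc σ (by omega) (by omega)).1,
    extPerm_le_of_ne_maxPos σ (by omega) (by omega)⟩

lemma posOf_succMax (h : maxPos σ ≠ n + 1) : posOf σ (succMax σ) = maxPos σ + 1 :=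
  posOf_extPerm σ (by omega) (Nat.succ_le_of_lt ((maxPos_le σ).lt_of_ne h))

lemma posOf_predMax (h : 1 ≤ predMax σ) : posOf σ (predMax σ) + 1 = maxPos σ := by
  have h2 : maxPos σ - 1 ≠ 0 := fun h0 => by
    rw [predMax, h0, extPerm_zero] at h
    omega
  rw [predMax, posOf_extPerm σ (by omega) (by have := maxPos_le σ; omega)]
  omega

lemma predMax_ne_succMax : predMax σ ≠ succMax σ := fun he => by
  have := maxPos_le σ
  have := extPerm_injOn σ (by omega) (by omega) he
  omega

variable (σ)

/-- The step of `profile (delTop σ) ++ [false, false]` that becomes an up step in `profile σ`: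
the first step of `n + 1` if it comes last, and otherwise the step of the larger neighbour of
`n + 1` on the side facing it. -/
def flipIndex : ℕ :=
  if maxPos σ = n + 1 then 2 * n
  else if predMax σ < succMax σ then 2 * (succMax σ - 1) + 1
  else 2 * (predMax σ - 1)

lemma flipIndex_le : flipIndex σ ≤ 2 * n := by
  have := predMax_le σ
  unfold flipIndex
  split_ifs with hP
  · rfl
  · have := succMax_mem_Icc hP
    omega
  · omega

lemma profileStep_flipIndex (h : flipIndex σ < 2 * n) :
    profileStep σ (flipIndex σ) = true ∧ profileStep (delTop σ) (flipIndex σ) = false := by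
  unfold flipIndex at h ⊢
  split_ifs at h ⊢ with hP hab
  · omega
  · obtain ⟨hb₁, hb₂⟩ := succMax_mem_Icc hP
    rw [profileStep_odd (by omega), profileStep_odd (by omega),
      show (2 * (succMax σ - 1) + 1) / 2 + 1 = succMax σ by omega,
      largerBefore_of_eq_succ hb₂ (posOf_succMax hP),
      largerBefore_delTop_of_eq_succ hb₁ hb₂ (posOf_succMax hP)]
    simpa using hab.le
  · have hb := succMax_mem_Icc hP
    have ha : 1 ≤ predMax σ := by omega
    have ha' := predMax_le σ
    rw [profileStep_even (by omega), profileStep_even (by omega),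
      show 2 * (predMax σ - 1) / 2 + 1 = predMax σ by omega,
      largerAfter_of_succ_eq ha' (posOf_predMax ha),
      largerAfter_delTop_of_succ_eq ha ha' (posOf_predMax ha)]
    simpa using hab

lemma profileStep_delTop_of_ne {j : ℕ} (hj : j < 2 * n) (hk : j ≠ flipIndex σ) :
    profileStep (delTop σ) j = profileStep σ j := by
  have hv₁ : 1 ≤ j / 2 + 1 := by omega
  have hv₂ : j / 2 + 1 ≤ n := by omega
  rcases Nat.mod_two_eq_zero_or_one j with hpar | hpar
  · rw [profileStep_even hpar, profileStep_even hpar]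
    by_cases hq : posOf σ (j / 2 + 1) + 1 = maxPos σ
    · have ha : predMax σ = j / 2 + 1 := by
        rw [predMax, ← hq, Nat.add_sub_cancel, extPerm_posOf σ hv₁ (by omega)]
      rw [largerAfter_delTop_of_succ_eq hv₁ hv₂ hq, largerAfter_of_succ_eq hv₂ hq,
        decide_eq_true_eq]
      unfold flipIndex at hk
      split_ifs at hk with hP hab
      · rw [succMax, hP, extPerm_of_lt σ (lt_add_one (n + 1))]
        omega
      · omega
      · omega
    · exact largerAfter_delTop hv₁ hv₂ hq
  · rw [profileStep_odd hpar, profileStep_odd hpar]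
    by_cases hq : posOf σ (j / 2 + 1) = maxPos σ + 1
    · have hb : succMax σ = j / 2 + 1 := by
        rw [succMax, ← hq, extPerm_posOf σ hv₁ (by omega)]
      rw [largerBefore_delTop_of_eq_succ hv₁ hv₂ hq, largerBefore_of_eq_succ hv₂ hq,
        decide_eq_true_eq]
      have hqn := (posOf_mem_Icc σ hv₁ (by omega : j / 2 + 1 ≤ n + 1)).2
      unfold flipIndex at hk
      split_ifs at hk with hP hab
      · omega
      · omega
      · have := predMax_ne_succMax (σ := σ)
        omega
    · exact largerBefore_delTop hv₁ hv₂ hq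

lemma profileStep_of_two_mul_le {j : ℕ} (h₁ : 2 * n ≤ j) (h₂ : j < 2 * n + 2) :
    profileStep σ j = decide (j = flipIndex σ) := by
  rcases Nat.mod_two_eq_zero_or_one j with hpar | hpar
  · rw [profileStep_even hpar, show j / 2 + 1 = n + 1 by omega, largerAfter_last,
      show j = 2 * n by omega, decide_eq_decide]
    have := predMax_le σ
    have := one_le_maxPos σ
    have := maxPos_le σ
    unfold flipIndex
    split_ifs <;> omega
  · have := flipIndex_le σ
    rw [profileStep_odd hpar, show j / 2 + 1 = n + 1 by omega, largerBefore_last, eq_comm,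
      decide_eq_false_iff_not]
    omega

theorem profile_eq_set_flipIndex :
    profile σ = (profile (delTop σ) ++ [false, false]).set (flipIndex σ) true := by
  have hk := flipIndex_le σ
  refine List.ext_getElem
    (by rw [List.length_set, List.length_append, length_profile, length_profile]; rfl) fun j h₁ h₂ => ?_
  rw [length_profile] at h₁
  rw [getElem_profile, List.getElem_set]
  by_cases hj : j < 2 * n
  · rw [List.getElem_append_left (by rwa [length_profile]), getElem_profile]
    split_ifs with hjk
    · subst hjk
      exact (profileStep_flipIndex σ hj).1
    · exact (profileStep_delTop_of_ne σ hj (Ne.symm hjk)).symm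
  · rw [profileStep_of_two_mul_le σ (by omega) h₁]
    split_ifs with hjk
    · simp [hjk]
    · have hlen := length_profile (delTop σ)
      obtain rfl | rfl : j = 2 * n ∨ j = 2 * n + 1 := by omega
      all_goals simp [List.getElem_append_right, hlen, Ne.symm hjk]

lemma getElem?_flipIndex :
    (profile (delTop σ) ++ [false, false])[flipIndex σ]? = some false := by
  have hk := flipIndex_le σ
  rcases hk.lt_or_eq with h | h
  · rw [List.getElem?_append_left (by rwa [length_profile]),
      List.getElem?_eq_getElem (by rwa [length_profile]),
      getElem_profile, (profileStep_flipIndex σ h).2]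
  · rw [List.getElem?_append_right (by rw [length_profile]; omega), length_profile, h]
    simp

theorem ribbon_profile_delTop : Ribbon (profile (delTop σ)) (profile σ) :=
  ⟨flipIndex σ, by rw [length_profile]; have := flipIndex_le σ; omega, getElem?_flipIndex σ,
    profile_eq_set_flipIndex σ⟩

end FlipIndex

theorem isDyck_profile : ∀ {n : ℕ} (σ : Perm (Fin n)), IsDyck (profile σ)
  | 0, σ => by simp [profile, IsDyck]
  | _ + 1, σ => (isDyck_profile (delTop σ)).ribbon (ribbon_profile_delTop σ)

section InsertMax

/-- Inserts `n + 1` into the one-line word of `τ` at the 0-indexed position `p`. -/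
def insertMax (τ : Perm (Fin n)) (p : Fin (n + 1)) : Perm (Fin (n + 1)) :=
  (finSuccEquiv' p).trans ((optionCongr τ).trans (finSuccEquiv' (Fin.last n)).symm)

lemma insertMax_apply_self (τ : Perm (Fin n)) (p : Fin (n + 1)) :
    insertMax τ p p = Fin.last n := by
  simp [insertMax, finSuccEquiv'_at, finSuccEquiv'_symm_none]

lemma insertMax_apply_succAbove (τ : Perm (Fin n)) (p : Fin (n + 1)) (j : Fin n) :
    insertMax τ p (p.succAbove j) = (τ j).castSucc := by
  simp [insertMax, finSuccEquiv'_succAbove, finSuccEquiv'_symm_some]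

lemma insertMax_symm_last (τ : Perm (Fin n)) (p : Fin (n + 1)) :
    (insertMax τ p).symm (Fin.last n) = p := by
  rw [symm_apply_eq, insertMax_apply_self]

lemma maxPos_insertMax (τ : Perm (Fin n)) (p : Fin (n + 1)) :
    maxPos (insertMax τ p) = p + 1 := by
  rw [maxPos, insertMax_symm_last]

lemma delTop_insertMax (τ : Perm (Fin n)) (p : Fin (n + 1)) : delTop (insertMax τ p) = τ := by
  ext j
  change ((insertMax τ p) (((insertMax τ p).symm (Fin.last n)).succAbove j) : ℕ) = _
  rw [insertMax_symm_last, insertMax_apply_succAbove, Fin.val_castSucc]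

lemma insertMax_delTop (σ : Perm (Fin (n + 1))) :
    insertMax (delTop σ) (σ.symm (Fin.last n)) = σ := by
  ext i : 1
  by_cases hi : i = σ.symm (Fin.last n)
  · rw [hi, insertMax_apply_self, apply_symm_apply]
  · obtain ⟨j, rfl⟩ := Fin.exists_succAbove_eq hi
    rw [insertMax_apply_succAbove]
    exact Fin.castSucc_castPred _ (by simpa [eq_symm_apply] using hi)

end InsertMax

section Step

def insertionPos (τ : Perm (Fin n)) (k : ℕ) : ℕ :=
  if k = 2 * n then n + 1
  else if k % 2 = 1 then posOf τ (k / 2 + 1)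
  else posOf τ (k / 2 + 1) + 1

lemma insertionPos_flipIndex (σ : Perm (Fin (n + 1))) :
    insertionPos (delTop σ) (flipIndex σ) = maxPos σ := by
  unfold flipIndex
  split_ifs with hP hab
  · rw [insertionPos, if_pos rfl, hP]
  · obtain ⟨hb₁, hb₂⟩ := succMax_mem_Icc hP
    rw [insertionPos, if_neg (by omega), if_pos (by omega),
      show (2 * (succMax σ - 1) + 1) / 2 + 1 = succMax σ by omega,
      posOf_delTop_of_gt σ hb₁ hb₂ (by rw [posOf_succMax hP]; omega), posOf_succMax hP]
    omega
  · have ha₁ : 1 ≤ predMax σ := by have := succMax_mem_Icc hP; omega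
    have ha₂ := predMax_le σ
    have hpos := posOf_predMax ha₁
    rw [insertionPos, if_neg (by omega), if_neg (by omega),
      show 2 * (predMax σ - 1) / 2 + 1 = predMax σ by omega,
      posOf_delTop_of_lt σ ha₁ ha₂ (by omega), hpos]

lemma index_eq_of_set_eq_set {L : List Bool} {k k' : ℕ} (hk : L[k]? = some false)
    (h : L.set k true = L.set k' true) : k = k' := by
  by_contra hne
  have hkL : k < L.length := (List.getElem?_eq_some_iff.1 hk).1
  rw [List.getElem?_eq_getElem hkL, Option.some.injEq] at hk
  have := congrArg (·[k]?) h
  simp [hkL, Ne.symm hne, hk] at this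

theorem eq_of_delTop_eq_of_profile_eq {σ σ' : Perm (Fin (n + 1))}
    (hτ : delTop σ = delTop σ') (hp : profile σ = profile σ') : σ = σ' := by
  have hk : flipIndex σ = flipIndex σ' := by
    rw [profile_eq_set_flipIndex σ, profile_eq_set_flipIndex σ', hτ] at hp
    exact index_eq_of_set_eq_set (hτ ▸ getElem?_flipIndex σ) hp
  have hP : σ.symm (Fin.last n) = σ'.symm (Fin.last n) := by
    have := insertionPos_flipIndex σ
    rw [hτ, hk, insertionPos_flipIndex σ', maxPos, maxPos] at this
    exact Fin.ext (by omega)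
  rw [← insertMax_delTop σ, ← insertMax_delTop σ', hτ, hP]

lemma extPerm_insertMax_of_le (τ : Perm (Fin n)) (p : Fin (n + 1)) {i : ℕ} (h : i ≤ p) :
    extPerm (insertMax τ p) i = extPerm τ i := by
  rw [← extPerm_delTop_of_lt _ (by rw [maxPos_insertMax]; omega), delTop_insertMax]

lemma extPerm_insertMax_succ (τ : Perm (Fin n)) (p : Fin (n + 1)) {i : ℕ} (h : (p : ℕ) < i)
    (hi : i ≤ n) : extPerm (insertMax τ p) (i + 1) = extPerm τ i := by
  rw [← extPerm_delTop_of_le _ (by rw [maxPos_insertMax]; omega) hi, delTop_insertMax]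

lemma flipIndex_insertMax_last (τ : Perm (Fin n)) :
    flipIndex (insertMax τ (Fin.last n)) = 2 * n := by
  rw [flipIndex, if_pos (by rw [maxPos_insertMax, Fin.val_last])]

lemma flipIndex_insertMax_after {τ : Perm (Fin n)} {v : ℕ} {p : Fin (n + 1)} (hv₁ : 1 ≤ v)
    (hv₂ : v ≤ n) (h : largerAfter τ v = false) (hp : (p : ℕ) = posOf τ v) :
    flipIndex (insertMax τ p) = 2 * (v - 1) := by
  rw [largerAfter, decide_eq_false_iff_not] at h
  have hq := posOf_mem_Icc τ hv₁ hv₂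
  have hqn : posOf τ v < n := by
    by_contra
    rw [show posOf τ v = n by omega, extPerm_of_lt τ (lt_add_one n)] at h
    omega
  have hP : maxPos (insertMax τ p) = posOf τ v + 1 := by rw [maxPos_insertMax, hp]
  have ha : predMax (insertMax τ p) = v := by
    rw [predMax, hP, Nat.add_sub_cancel, extPerm_insertMax_of_le τ p hp.ge,
      extPerm_posOf τ hv₁ hv₂]
  have hb : succMax (insertMax τ p) = extPerm τ (posOf τ v + 1) := by
    rw [succMax, hP, extPerm_insertMax_succ τ p (by omega) (by omega)]
  have := predMax_ne_succMax (σ := insertMax τ p)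
  rw [flipIndex, if_neg (by omega), if_neg (by omega), ha]

lemma flipIndex_insertMax_before {τ : Perm (Fin n)} {v : ℕ} {p : Fin (n + 1)} (hv₁ : 1 ≤ v)
    (hv₂ : v ≤ n) (h : largerBefore τ v = false) (hp : (p : ℕ) + 1 = posOf τ v) :
    flipIndex (insertMax τ p) = 2 * (v - 1) + 1 := by
  rw [largerBefore, decide_eq_false_iff_not] at h
  have hq := posOf_mem_Icc τ hv₁ hv₂
  have hP : maxPos (insertMax τ p) = posOf τ v := by rw [maxPos_insertMax, hp]
  have ha : predMax (insertMax τ p) = extPerm τ (posOf τ v - 1) := by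
    rw [predMax, hP, extPerm_insertMax_of_le τ p (by omega)]
  have hb : succMax (insertMax τ p) = v := by
    rw [succMax, hP, extPerm_insertMax_succ τ p (by omega) hq.2, extPerm_posOf τ hv₁ hv₂]
  have := predMax_ne_succMax (σ := insertMax τ p)
  rw [flipIndex, if_neg (by omega), if_pos (by omega), hb]

theorem exists_delTop_eq_profile_eq {τ : Perm (Fin n)} {E : List Bool}
    (h : Ribbon (profile τ) E) : ∃ σ, delTop σ = τ ∧ profile σ = E := by
  obtain ⟨k, hk, hf, rfl⟩ := h
  rw [length_profile] at hk
  suffices ∃ p, flipIndex (insertMax τ p) = k by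
    obtain ⟨p, hp⟩ := this
    exact ⟨insertMax τ p, delTop_insertMax τ p,
      by rw [profile_eq_set_flipIndex, delTop_insertMax, hp]⟩
  by_cases hk' : k = 2 * n
  · exact ⟨Fin.last n, hk' ▸ flipIndex_insertMax_last τ⟩
  have hv₁ : 1 ≤ k / 2 + 1 := by omega
  have hv₂ : k / 2 + 1 ≤ n := by omega
  have hq := posOf_mem_Icc τ hv₁ hv₂
  have hstep : profileStep τ k = false := by
    rw [List.getElem?_append_left (by rw [length_profile]; omega),
      List.getElem?_eq_getElem (by rw [length_profile]; omega), getElem_profile,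
      Option.some.injEq] at hf
    exact hf
  rcases Nat.mod_two_eq_zero_or_one k with hpar | hpar
  · rw [profileStep_even hpar] at hstep
    exact ⟨⟨posOf τ (k / 2 + 1), by omega⟩,
      (flipIndex_insertMax_after hv₁ hv₂ hstep rfl).trans (by omega)⟩
  · rw [profileStep_odd hpar] at hstep
    exact ⟨⟨posOf τ (k / 2 + 1) - 1, by omega⟩,
      (flipIndex_insertMax_before hv₁ hv₂ hstep (Nat.sub_add_cancel hq.1)).trans (by omega)⟩

end Step

section Chains

noncomputable def profileChain (σ : Perm (Fin n)) (i : Fin n) : List Bool :=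
  profile (dels σ (n - 1 - i))

def IsDyckChain (C : Fin n → List Bool) : Prop :=
  (∀ i : Fin n, IsDyck (C i) ∧ (C i).length = 2 * ((i : ℕ) + 1)) ∧
    ∀ i : ℕ, (h : i + 1 < n) → Ribbon (C ⟨i, Nat.lt_of_succ_lt h⟩) (C ⟨i + 1, h⟩)

lemma ribbon_profile_delTop' : ∀ {s : ℕ} (ρ : Perm (Fin s)), 0 < s →
    Ribbon (profile (delTop' ρ)) (profile ρ)
  | _ + 1, ρ, _ => ribbon_profile_delTop ρ

lemma profileChain_isDyckChain (σ : Perm (Fin n)) : IsDyckChain (profileChain σ) := by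
  refine ⟨fun i => ⟨isDyck_profile _, ?_⟩, fun i h => ?_⟩
  · rw [profileChain, length_profile]
    omega
  · rw [profileChain, profileChain, show n - 1 - i = n - 1 - (i + 1) + 1 by omega]
    exact ribbon_profile_delTop' _ (show 0 < n - (n - 1 - (i + 1)) by omega)

lemma profile_eq_of_heq {a b : ℕ} (h : a = b) {ρ : Perm (Fin a)} {ρ' : Perm (Fin b)}
    (he : HEq ρ ρ') : profile ρ = profile ρ' := by
  subst h
  cases he
  rfl

lemma delTop'_heq {a b : ℕ} (h : a = b) {ρ : Perm (Fin a)} {ρ' : Perm (Fin b)}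
    (he : HEq ρ ρ') : HEq (delTop' ρ) (delTop' ρ') := by
  subst h
  cases he
  rfl

lemma dels_succ_heq (σ : Perm (Fin (n + 1))) : ∀ m, HEq (dels σ (m + 1)) (dels (delTop σ) m)
  | 0 => HEq.rfl
  | m + 1 => delTop'_heq (Nat.add_sub_add_right n 1 m) (dels_succ_heq σ m)

lemma profileChain_castSucc (σ : Perm (Fin (n + 1))) (i : Fin n) :
    profileChain σ i.castSucc = profileChain (delTop σ) i := by
  rw [profileChain, profileChain, Fin.val_castSucc,
    show n + 1 - 1 - i = n - 1 - i + 1 by omega]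
  exact profile_eq_of_heq (by omega) (dels_succ_heq σ _)

lemma profileChain_last (σ : Perm (Fin (n + 1))) : profileChain σ (Fin.last n) = profile σ := by
  rw [profileChain, Fin.val_last, show n + 1 - 1 - n = 0 by omega]
  rfl

theorem profileChain_injective : ∀ {n : ℕ}, Function.Injective (profileChain (n := n))
  | 0, σ, σ', _ => Subsingleton.elim σ σ'
  | _ + 1, σ, σ', h => eq_of_delTop_eq_of_profile_eq
      (profileChain_injective (funext fun i => by
        rw [← profileChain_castSucc, h, profileChain_castSucc]))
      (by rw [← profileChain_last, h, profileChain_last])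

lemma ribbon_nil_of_isDyck {E : List Bool} (hE : IsDyck E) (h : E.length = 2) :
    Ribbon [] E :=
  ⟨0, Nat.zero_lt_one, rfl, hE.eq_of_length_eq_two h⟩

theorem exists_profileChain_eq : ∀ {n : ℕ} {C : Fin n → List Bool}, IsDyckChain C →
    ∃ σ, profileChain σ = C
  | 0, C, _ => ⟨1, funext finZeroElim⟩
  | n + 1, C, hC => by
    obtain ⟨τ, hτ⟩ := exists_profileChain_eq (C := C ∘ Fin.castSucc)
      ⟨fun i => hC.1 i.castSucc, fun i h => hC.2 i (by omega)⟩
    have hrib : Ribbon (profile τ) (C (Fin.last n)) := by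
      cases n with
      | zero =>
        rw [show profile τ = [] from List.eq_nil_of_length_eq_zero (length_profile τ)]
        exact ribbon_nil_of_isDyck (hC.1 0).1 (hC.1 0).2
      | succ m =>
        rw [← profileChain_last, hτ]
        exact hC.2 m (by omega)
    obtain ⟨σ, rfl, hσ⟩ := exists_delTop_eq_profile_eq hrib
    refine ⟨σ, funext (Fin.lastCases ?_ fun i => ?_)⟩
    · rw [profileChain_last, hσ]
    · rw [profileChain_castSucc, hτ, Function.comp_apply]

end Chains

end ProfileChain

open ProfileChain

/-- The map `σ ↦ (Δ(σ^{(n-1)}), …, Δ(σ'), Δ(σ))` is a bijection from `S_n` to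
the set of `n`-chains of Dyck shapes `D₁ ⊏ ⋯ ⊏ Dₙ`, where `Dᵢ` is a Dyck path
of length `2i` and `⊏` is ribbon addition. -/
theorem profile_chain_bijection (n : ℕ) :
    Set.BijOn (fun (σ : Equiv.Perm (Fin n)) (i : Fin n) =>
        profile (dels σ (n - 1 - (i : ℕ))))
      Set.univ
      {C : Fin n → List Bool |
        (∀ i : Fin n, IsDyck (C i) ∧ (C i).length = 2 * ((i : ℕ) + 1)) ∧
        ∀ i : ℕ, (h : i + 1 < n) →
          Ribbon (C ⟨i, by omega⟩) (C ⟨i + 1, h⟩)} := by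
  refine ⟨fun σ _ => profileChain_isDyckChain σ, fun _ _ _ _ h => profileChain_injective h,
    fun C hC => ?_⟩
  obtain ⟨σ, hσ⟩ := exists_profileChain_eq hC
  exact ⟨σ, Set.mem_univ σ, hσ⟩
end
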